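/- arXiv:2604.04320 — 2 statements merged into one kernel-verified Lean document; each statement's English description precedes it below -/
import Mathlib

section
/- Let H be a complex Hilbert space, r ≥ 2, and let A_0, …, A_{r-1} be pairwise commuting bounded self-adjoint operators on H. Suppose (T_n)_{n≥0} is a sequence of bounded operators on H satisfying the recurrence T_{n+r} = A_0 T_{n+r-1} + A_1 T_{n+r-2} + ⋯ + A_{r-1} T_n for all n ≥ 0. Then for every n ≥ r, T_n = Σ_{s=0}^{r-1} ρ(n−s, r; A) W_s, where W_s := Σ_{j=s}^{r-1} A_j T_{s+r-1-j} for s = 0, …, r−1. -/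
open Finset


lemma mult_cancel {α : Type*} [DecidableEq α] (s : Finset α) (k : α → ℕ) {j : α}
    (hj : j ∈ s) (h : k j ≠ 0) :
    (∑ i ∈ s, k i) * Nat.multinomial s (Function.update k j (k j - 1)) =
      k j * Nat.multinomial s k := by
  set k' := Function.update k j (k j - 1) with hk'
  have hsum : ∑ i ∈ s, k i = (∑ i ∈ s, k' i) + 1 := by
    rw [← Finset.add_sum_erase _ k hj, ← Finset.add_sum_erase _ k' hj]
    have h1 : ∀ i ∈ s.erase j, k' i = k i := fun i hi =>
      Function.update_of_ne (Finset.ne_of_mem_erase hi) _ _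
    have he : ∑ i ∈ s.erase j, k' i = ∑ i ∈ s.erase j, k i := Finset.sum_congr rfl h1
    have h2 : k' j = k j - 1 := Function.update_self _ _ _
    omega
  have hprod : ∏ i ∈ s, Nat.factorial (k i) = k j * ∏ i ∈ s, Nat.factorial (k' i) := by
    rw [← Finset.mul_prod_erase _ (fun i => Nat.factorial (k i)) hj,
        ← Finset.mul_prod_erase _ (fun i => Nat.factorial (k' i)) hj]
    have h1 : ∀ i ∈ s.erase j, Nat.factorial (k' i) = Nat.factorial (k i) := fun i hi => by
      rw [hk', Function.update_of_ne (Finset.ne_of_mem_erase hi)]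
    rw [Finset.prod_congr rfl h1, ← mul_assoc]
    congr 1
    obtain ⟨t, ht⟩ : ∃ t, k j = t + 1 := ⟨k j - 1, by omega⟩
    rw [hk', Function.update_self, ht, Nat.factorial_succ]
    simp
  have spec1 := Nat.multinomial_spec s k
  have spec2 := Nat.multinomial_spec s k'
  have hpos : 0 < ∏ i ∈ s, Nat.factorial (k' i) := Finset.prod_pos fun i _ => Nat.factorial_pos _
  apply Nat.eq_of_mul_eq_mul_left hpos
  calc (∏ i ∈ s, Nat.factorial (k' i)) * ((∑ i ∈ s, k i) * Nat.multinomial s k')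
      = (∑ i ∈ s, k i) * ((∏ i ∈ s, Nat.factorial (k' i)) * Nat.multinomial s k') := by ring
    _ = (∑ i ∈ s, k i) * Nat.factorial (∑ i ∈ s, k' i) := by rw [spec2]
    _ = Nat.factorial ((∑ i ∈ s, k' i) + 1) := by rw [hsum, Nat.factorial_succ]
    _ = Nat.factorial (∑ i ∈ s, k i) := by rw [hsum]
    _ = (∏ i ∈ s, Nat.factorial (k i)) * Nat.multinomial s k := spec1.symm
    _ = (∏ i ∈ s, Nat.factorial (k' i)) * (k j * Nat.multinomial s k) := by rw [hprod]; ring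

lemma mult_pascal {α : Type*} [DecidableEq α] (s : Finset α) (k : α → ℕ)
    (h : 0 < ∑ i ∈ s, k i) :
    Nat.multinomial s k =
      ∑ j ∈ s.filter (fun j => k j ≠ 0), Nat.multinomial s (Function.update k j (k j - 1)) := by
  apply Nat.eq_of_mul_eq_mul_left h
  rw [Finset.mul_sum]
  have : ∀ j ∈ s.filter (fun j => k j ≠ 0),
      (∑ i ∈ s, k i) * Nat.multinomial s (Function.update k j (k j - 1)) =
        k j * Nat.multinomial s k := by
    intro j hj
    rw [Finset.mem_filter] at hj
    exact mult_cancel s k hj.1 hj.2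
  rw [Finset.sum_congr rfl this, ← Finset.sum_mul]
  congr 1
  exact (Finset.sum_filter_ne_zero (f := k) s).symm


/-- The combinatorial operator coefficient `ρ(m, r; A)`: the sum, over multi-indices
`k = (k₀, …, k_{r-1}) ∈ ℤ₊ʳ` with `1·k₀ + 2·k₁ + ⋯ + r·k_{r-1} = m − r`, of the multinomial
coefficient `(k₀+⋯+k_{r-1})! / (k₀!⋯k_{r-1}!)` times `A₀^{k₀} ⋯ A_{r-1}^{k_{r-1}}`,
with the convention `ρ(m, r; A) = 0` for `m < r` (and in particular `ρ(r, r; A) = 1`). -/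
noncomputable def rho {R : Type*} [Ring R] (r : ℕ) (A : ℕ → R) (m : ℕ) : R :=
  if m < r then 0
  else ∑ k ∈ (Fintype.piFinset fun _ : Fin r => Finset.range (m - r + 1)).filter
      (fun k : Fin r → ℕ => ∑ j : Fin r, ((j : ℕ) + 1) * k j = m - r),
    (Nat.multinomial Finset.univ k : R) * (List.ofFn fun j : Fin r => A (j : ℕ) ^ k j).prod

lemma rho_of_lt {R : Type*} [Ring R] {r : ℕ} (A : ℕ → R) {m : ℕ} (h : m < r) :
    rho r A m = 0 := if_pos h

lemma mem_weight {r d : ℕ} (k : Fin r → ℕ) :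
    k ∈ (Fintype.piFinset fun _ : Fin r => Finset.range (d + 1)).filter
      (fun k : Fin r → ℕ => ∑ j : Fin r, ((j : ℕ) + 1) * k j = d) ↔
      ∑ j : Fin r, ((j : ℕ) + 1) * k j = d := by
  simp only [Finset.mem_filter, Fintype.mem_piFinset, Finset.mem_range]
  constructor
  · exact fun h => h.2
  · intro h
    refine ⟨fun i => ?_, h⟩
    have h1 : ((i : ℕ) + 1) * k i ≤ d := by
      rw [← h]
      exact Finset.single_le_sum (f := fun j : Fin r => ((j : ℕ) + 1) * k j)
        (fun _ _ => Nat.zero_le _) (Finset.mem_univ i)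
    have h2 : k i ≤ ((i : ℕ) + 1) * k i := Nat.le_mul_of_pos_left _ (Nat.succ_pos _)
    omega

lemma rho_of_le {R : Type*} [Ring R] {r : ℕ} (A : ℕ → R) {m : ℕ} (h : r ≤ m) :
    rho r A m = ∑ k ∈ (Fintype.piFinset fun _ : Fin r => Finset.range (m - r + 1)).filter
      (fun k : Fin r → ℕ => ∑ j : Fin r, ((j : ℕ) + 1) * k j = m - r),
    (Nat.multinomial Finset.univ k : R) * (List.ofFn fun j : Fin r => A (j : ℕ) ^ k j).prod :=
  if_neg (not_lt.2 h)

lemma rho_congr {R : Type*} [Ring R] {r : ℕ} {A B : ℕ → R} (h : ∀ i < r, A i = B i)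
    (m : ℕ) : rho r A m = rho r B m := by
  unfold rho
  split
  · rfl
  · refine Finset.sum_congr rfl fun k _ => ?_
    have he : (fun j : Fin r => A (j : ℕ) ^ k j) = fun j : Fin r => B (j : ℕ) ^ k j :=
      funext fun j => by rw [h _ j.isLt]
    rw [he]

lemma rho_map {R S : Type*} [Ring R] [Ring S] (f : R →+* S) (r : ℕ) (A : ℕ → R) (m : ℕ) :
    f (rho r A m) = rho r (fun i => f (A i)) m := by
  unfold rho
  split
  · exact map_zero f
  · rw [map_sum]
    refine Finset.sum_congr rfl fun k _ => ?_
    have he : (⇑f ∘ fun j : Fin r => A (j : ℕ) ^ k j) =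
        fun j : Fin r => f (A (j : ℕ)) ^ k j := funext fun j => by simp [map_pow]
    rw [map_mul, map_natCast, map_list_prod, List.map_ofFn, he]

lemma weight_update {r : ℕ} (k : Fin r → ℕ) (j : Fin r) (c : ℕ) :
    (∑ i : Fin r, ((i : ℕ) + 1) * (Function.update k j c i)) + ((j : ℕ) + 1) * k j
      = (∑ i : Fin r, ((i : ℕ) + 1) * k i) + ((j : ℕ) + 1) * c := by
  rw [← Finset.add_sum_erase _ (fun i : Fin r => ((i : ℕ) + 1) * Function.update k j c i)
      (Finset.mem_univ j),
    ← Finset.add_sum_erase _ (fun i : Fin r => ((i : ℕ) + 1) * k i) (Finset.mem_univ j)]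
  have he : ∑ i ∈ Finset.univ.erase j, ((i : ℕ) + 1) * Function.update k j c i
      = ∑ i ∈ Finset.univ.erase j, ((i : ℕ) + 1) * k i :=
    Finset.sum_congr rfl fun i hi => by rw [Function.update_of_ne (Finset.ne_of_mem_erase hi)]
  rw [he, Function.update_self]
  ring

lemma prod_pow_update_sub {R : Type*} [CommMonoid R] {r : ℕ} (A : Fin r → R) (k : Fin r → ℕ)
    (j : Fin r) (h : k j ≠ 0) :
    ∏ i : Fin r, A i ^ k i = A j * ∏ i : Fin r, A i ^ (Function.update k j (k j - 1) i) := by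
  rw [← Finset.mul_prod_erase _ (fun i => A i ^ k i) (Finset.mem_univ j),
    ← Finset.mul_prod_erase _ (fun i => A i ^ Function.update k j (k j - 1) i)
      (Finset.mem_univ j)]
  have he : ∏ i ∈ Finset.univ.erase j, A i ^ (Function.update k j (k j - 1) i)
      = ∏ i ∈ Finset.univ.erase j, A i ^ k i :=
    Finset.prod_congr rfl fun i hi => by rw [Function.update_of_ne (Finset.ne_of_mem_erase hi)]
  rw [he, Function.update_self, ← mul_assoc]
  congr 1
  obtain ⟨t, ht⟩ : ∃ t, k j = t + 1 := ⟨k j - 1, by omega⟩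
  rw [ht]
  simp [pow_succ, mul_comm]

lemma rho_rec_comm {R : Type*} [CommRing R] {r : ℕ} (hr : 1 ≤ r) (A : ℕ → R) (m : ℕ) :
    rho r A m = (∑ j ∈ Finset.range r, A j * rho r A (m - 1 - j)) + (if m = r then 1 else 0) := by
  rcases lt_trichotomy m r with hm | hm | hm
  · rw [rho_of_lt A hm, if_neg (by omega),
      Finset.sum_eq_zero fun j hj => by rw [rho_of_lt A (show m - 1 - j < r by omega), mul_zero],
      add_zero]
  · have hm' : r = m := hm.symm
    subst hm'
    rw [if_pos rfl,
      Finset.sum_eq_zero fun j hj => by rw [rho_of_lt A (show r - 1 - j < r by omega), mul_zero],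
      zero_add, rho_of_le A le_rfl]
    have hset : (Fintype.piFinset fun _ : Fin r => Finset.range (r - r + 1)).filter
        (fun k : Fin r → ℕ => ∑ j : Fin r, ((j : ℕ) + 1) * k j = r - r) = {fun _ => 0} := by
      ext k
      rw [mem_weight, Finset.mem_singleton, Nat.sub_self]
      constructor
      · intro h
        funext i
        rw [Finset.sum_eq_zero_iff] at h
        have h2 := h i (Finset.mem_univ i)
        rcases Nat.mul_eq_zero.mp h2 with h3 | h3 <;> omega
      · intro h
        subst h
        simp
    rw [hset, Finset.sum_singleton]
    have hm1 : Nat.multinomial Finset.univ (fun _ : Fin r => 0) = 1 := by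
      have := Nat.multinomial_spec Finset.univ (fun _ : Fin r => 0)
      simpa using this
    simp [hm1]
  · -- main case m > r
    have hd1 : 1 ≤ m - r := by omega
    rw [rho_of_le A hm.le, if_neg (by omega), add_zero]
    set d := m - r with hd
    set K := (Fintype.piFinset fun _ : Fin r => Finset.range (d + 1)).filter
        (fun k : Fin r → ℕ => ∑ j : Fin r, ((j : ℕ) + 1) * k j = d) with hK
    clear_value K
    clear_value d
    simp only [List.prod_ofFn]
    have step1 : ∀ k ∈ K, (Nat.multinomial Finset.univ k : R) * ∏ i : Fin r, A (i : ℕ) ^ k i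
        = ∑ j ∈ Finset.univ.filter (fun j : Fin r => k j ≠ 0),
            (Nat.multinomial Finset.univ (Function.update k j (k j - 1)) : R) *
              ∏ i : Fin r, A (i : ℕ) ^ k i := by
      intro k hk
      rw [hK, mem_weight] at hk
      have hpos : 0 < ∑ i : Fin r, k i := by
        rcases Nat.eq_zero_or_pos (∑ i : Fin r, k i) with h0 | h0
        · exfalso
          rw [Finset.sum_eq_zero_iff] at h0
          rw [Finset.sum_eq_zero (fun i _ => by rw [h0 i (Finset.mem_univ i), mul_zero])] at hk
          omega
        · exact h0
      rw [mult_pascal _ _ hpos]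
      push_cast
      rw [Finset.sum_mul]
    rw [Finset.sum_congr rfl step1]
    have step2 : ∑ k ∈ K, ∑ j ∈ Finset.univ.filter (fun j : Fin r => k j ≠ 0),
          (Nat.multinomial Finset.univ (Function.update k j (k j - 1)) : R) *
            ∏ i : Fin r, A (i : ℕ) ^ k i
        = ∑ j : Fin r, ∑ k ∈ K.filter (fun k => k j ≠ 0),
            (Nat.multinomial Finset.univ (Function.update k j (k j - 1)) : R) *
              ∏ i : Fin r, A (i : ℕ) ^ k i := by
      simp only [Finset.sum_filter]
      exact Finset.sum_comm
    rw [step2]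
    have step3 : ∀ j : Fin r, ∑ k ∈ K.filter (fun k => k j ≠ 0),
          (Nat.multinomial Finset.univ (Function.update k j (k j - 1)) : R) *
            ∏ i : Fin r, A (i : ℕ) ^ k i
        = A (j : ℕ) * rho r A (m - 1 - (j : ℕ)) := by
      intro j
      by_cases hjd : (j : ℕ) + 1 ≤ d
      · have hm1 : r ≤ m - 1 - (j : ℕ) := by omega
        rw [rho_of_le A hm1]
        have hdd : m - 1 - (j : ℕ) - r = d - ((j : ℕ) + 1) := by omega
        rw [hdd]
        simp only [List.prod_ofFn]
        rw [Finset.mul_sum]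
        refine Finset.sum_bij' (fun k _ => Function.update k j (k j - 1))
          (fun k _ => Function.update k j (k j + 1)) ?_ ?_ ?_ ?_ ?_
        · intro k hk
          rw [Finset.mem_filter, hK, mem_weight] at hk
          obtain ⟨hw, hne⟩ := hk
          rw [mem_weight]
          have hwu := weight_update k j (k j - 1)
          have haux : ((j : ℕ) + 1) * (k j - 1) + ((j : ℕ) + 1) = ((j : ℕ) + 1) * k j := by
            obtain ⟨t, ht⟩ : ∃ t, k j = t + 1 := ⟨k j - 1, by omega⟩
            rw [ht, Nat.add_sub_cancel]
            ring
          omega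
        · intro k hk
          rw [mem_weight] at hk
          rw [Finset.mem_filter, hK, mem_weight]
          have hwu := weight_update k j (k j + 1)
          have h1 : ((j : ℕ) + 1) * (k j + 1) = ((j : ℕ) + 1) * k j + ((j : ℕ) + 1) := by ring
          constructor
          · omega
          · simp [Function.update_self]
        · intro k hk
          rw [Finset.mem_filter] at hk
          have hne := hk.2
          funext i
          rcases eq_or_ne i j with rfl | hij
          · simp only [Function.update_self]
            omega
          · simp [Function.update_of_ne hij]
        · intro k hk
          funext i
          rcases eq_or_ne i j with rfl | hij
          · simp only [Function.update_self]
            omega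
          · simp [Function.update_of_ne hij]
        · intro k hk
          rw [Finset.mem_filter] at hk
          have hne : k j ≠ 0 := hk.2
          rw [prod_pow_update_sub (fun i : Fin r => A (i : ℕ)) k j hne]
          ring
      · have hempty : K.filter (fun k => k j ≠ 0) = ∅ := by
          ext k
          simp only [Finset.mem_filter, Finset.notMem_empty, iff_false, not_and]
          intro hkK hne
          rw [hK, mem_weight] at hkK
          have hw := hkK
          have h1 : ((j : ℕ) + 1) * k j ≤ d := by
            rw [← hw]
            exact Finset.single_le_sum (f := fun i : Fin r => ((i : ℕ) + 1) * k i)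
              (fun _ _ => Nat.zero_le _) (Finset.mem_univ j)
          have h2 : (j : ℕ) + 1 ≤ ((j : ℕ) + 1) * k j := Nat.le_mul_of_pos_right _ (by omega)
          omega
        rw [hempty, Finset.sum_empty, rho_of_lt A (show m - 1 - (j : ℕ) < r by omega), mul_zero]
    rw [Finset.sum_congr rfl fun j _ => step3 j]
    exact Fin.sum_univ_eq_sum_range (fun j => A j * rho r A (m - 1 - j)) r

lemma rho_rec {R : Type*} [Ring R] {r : ℕ} (hr : 1 ≤ r) (A : ℕ → R)
    (hcomm : ∀ i < r, ∀ j < r, Commute (A i) (A j)) (m : ℕ) :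
    rho r A m = (∑ j ∈ Finset.range r, A j * rho r A (m - 1 - j)) + (if m = r then 1 else 0) := by
  set s : Set R := A '' {i | i < r} with hs
  have hcs : ∀ x ∈ s, ∀ y ∈ s, x * y = y * x := by
    rintro x ⟨i, hi, rfl⟩ y ⟨j, hj, rfl⟩
    exact hcomm i hi j hj
  letI : CommRing (Subring.closure s) := Subring.closureCommRingOfComm hcs
  set B : ℕ → Subring.closure s := fun i =>
    if h : i < r then ⟨A i, Subring.subset_closure ⟨i, h, rfl⟩⟩ else 0 with hB
  set f : Subring.closure s →+* R := (Subring.closure s).subtype with hf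
  have hAB : ∀ i < r, A i = f (B i) := by
    intro i hi
    simp [hB, hf, dif_pos hi]
  have key : ∀ m, rho r A m = f (rho r B m) := by
    intro m
    rw [rho_map f r B m]
    exact rho_congr hAB m
  rw [key m]
  rw [rho_rec_comm hr B m]
  rw [map_add, map_sum]
  congr 1
  · refine Finset.sum_congr rfl fun j hj => ?_
    rw [Finset.mem_range] at hj
    rw [map_mul, ← hAB j hj, ← key]
  · split <;> simp


/-- Combinatorial formula for an operator-valued sequence satisfying a linear recurrence
`T_{n+r} = A₀ T_{n+r-1} + ⋯ + A_{r-1} T_n` with pairwise commuting bounded self-adjoint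
operator coefficients. -/
theorem operator_recurrence_combinatorial_formula
    {H : Type*} [NormedAddCommGroup H] [InnerProductSpace ℂ H] [CompleteSpace H]
    {r : ℕ} (hr : 2 ≤ r) (A : ℕ → H →L[ℂ] H)
    (hsa : ∀ i < r, IsSelfAdjoint (A i))
    (hcomm : ∀ i < r, ∀ j < r, Commute (A i) (A j))
    (T : ℕ → H →L[ℂ] H)
    (hrec : ∀ n : ℕ, T (n + r) = ∑ j ∈ Finset.range r, A j * T (n + (r - 1 - j))) :
    ∀ n : ℕ, r ≤ n →
      T n = ∑ s ∈ Finset.range r, rho r A (n - s) *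
        (∑ j ∈ Finset.Icc s (r - 1), A j * T (s + (r - 1 - j))) := by
  intro n
  induction n using Nat.strong_induction_on with
  | _ n ih =>
  intro hn
  have hr1 : 1 ≤ r := by omega
  set W : ℕ → (H →L[ℂ] H) :=
    fun s => ∑ j ∈ Finset.Icc s (r - 1), A j * T (s + (r - 1 - j)) with hW
  have hS0 : ∀ m, m < r → (∑ s ∈ Finset.range r, rho r A (m - s) * W s) = 0 :=
    fun m hm => Finset.sum_eq_zero fun s hs => by
      rw [rho_of_lt A (show m - s < r by omega), zero_mul]
  -- unfold the recurrence once
  have hTn : T n = ∑ j ∈ Finset.range r, A j * T (n - (j + 1)) := by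
    have h := hrec (n - r)
    rw [Nat.sub_add_cancel hn] at h
    rw [h]
    refine Finset.sum_congr rfl fun j hj => ?_
    rw [Finset.mem_range] at hj
    have harg : n - r + (r - 1 - j) = n - (j + 1) := by omega
    rw [harg]
  -- expand rho on the RHS
  have hrho : ∀ s ∈ Finset.range r, rho r A (n - s) * W s
      = (∑ j ∈ Finset.range r, A j * rho r A (n - (j + 1) - s)) * W s
        + (if s = n - r then W s else 0) := by
    intro s hs
    rw [Finset.mem_range] at hs
    rw [rho_rec hr1 A hcomm (n - s), add_mul]
    congr 1
    · congr 1
      refine Finset.sum_congr rfl fun j hj => ?_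
      have harg : n - s - 1 - j = n - (j + 1) - s := by omega
      rw [harg]
    · have hiff : (n - s = r) ↔ (s = n - r) := by omega
      by_cases h : s = n - r
      · rw [if_pos (hiff.mpr h), if_pos h, one_mul]
      · rw [if_neg (fun hh => h (hiff.mp hh)), if_neg h, zero_mul]
  rw [Finset.sum_congr rfl hrho, Finset.sum_add_distrib]
  have hdelta : (∑ s ∈ Finset.range r, if s = n - r then W s else 0)
      = if n - r ∈ Finset.range r then W (n - r) else 0 := Finset.sum_ite_eq' _ _ _
  have hfirst : (∑ s ∈ Finset.range r,
        (∑ j ∈ Finset.range r, A j * rho r A (n - (j + 1) - s)) * W s)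
      = ∑ j ∈ Finset.range r, A j *
          (∑ s ∈ Finset.range r, rho r A (n - (j + 1) - s) * W s) := by
    simp only [Finset.sum_mul, Finset.mul_sum, mul_assoc]
    exact Finset.sum_comm
  rw [hdelta, hfirst, hTn]
  -- split both sums over j according to whether n - (j+1) ≥ r
  rw [← Finset.sum_filter_add_sum_filter_not (Finset.range r) (fun j => j < n - r)
      (fun j => A j * T (n - (j + 1))),
    ← Finset.sum_filter_add_sum_filter_not (Finset.range r) (fun j => j < n - r)
      (fun j => A j * (∑ s ∈ Finset.range r, rho r A (n - (j + 1) - s) * W s))]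
  have hpart1 : (∑ j ∈ (Finset.range r).filter (fun j => j < n - r), A j * T (n - (j + 1)))
      = ∑ j ∈ (Finset.range r).filter (fun j => j < n - r),
          A j * (∑ s ∈ Finset.range r, rho r A (n - (j + 1) - s) * W s) := by
    refine Finset.sum_congr rfl fun j hj => ?_
    rw [Finset.mem_filter, Finset.mem_range] at hj
    congr 1
    exact ih (n - (j + 1)) (by omega) (by omega)
  have hpart2' : (∑ j ∈ (Finset.range r).filter (fun j => ¬ j < n - r),
        A j * (∑ s ∈ Finset.range r, rho r A (n - (j + 1) - s) * W s)) = 0 := by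
    refine Finset.sum_eq_zero fun j hj => ?_
    rw [Finset.mem_filter, Finset.mem_range] at hj
    rw [hS0 (n - (j + 1)) (by omega), mul_zero]
  have hpart2 : (∑ j ∈ (Finset.range r).filter (fun j => ¬ j < n - r), A j * T (n - (j + 1)))
      = if n - r ∈ Finset.range r then W (n - r) else 0 := by
    by_cases hcase : n - r < r
    · rw [if_pos (Finset.mem_range.mpr hcase), hW]
      have hfil : (Finset.range r).filter (fun j => ¬ j < n - r)
          = Finset.Icc (n - r) (r - 1) := by
        ext j
        simp only [Finset.mem_filter, Finset.mem_range, Finset.mem_Icc, not_lt]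
        omega
      rw [hfil]
      refine Finset.sum_congr rfl fun j hj => ?_
      rw [Finset.mem_Icc] at hj
      have harg : n - (j + 1) = (n - r) + (r - 1 - j) := by omega
      rw [harg]
    · rw [if_neg (fun hh => hcase (Finset.mem_range.mp hh))]
      have hfil : (Finset.range r).filter (fun j => ¬ j < n - r) = ∅ := by
        ext j
        simp only [Finset.mem_filter, Finset.mem_range, Finset.notMem_empty, iff_false, not_lt]
        omega
      rw [hfil, Finset.sum_empty]
  rw [hpart1, hpart2, hpart2']
  rw [add_zero]
end

section
/- Let r ≥ 2 and let a_0, …, a_{r-1} be complex numbers. Suppose (γ_n)_{n≥0} is a sequence of complex numbers satisfying γ_{n+r} = a_0 γ_{n+r-1} + a_1 γ_{n+r-2} + ⋯ + a_{r-1} γ_n for all n ≥ 0. Then for every n ≥ r, γ_n = Σ_{s=0}^{r-1} ρ(n−s, r; a) W_s, where W_s := Σ_{j=s}^{r-1} a_j γ_{s+r-1-j} for s = 0, …, r−1. -/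
open Finset

lemma prod_fact_update {r : ℕ} (k : Fin r → ℕ) (j : Fin r) (v : ℕ) :
    ∏ i : Fin r, Nat.factorial (Function.update k j v i) = Nat.factorial v * ∏ i ∈ Finset.univ.erase j, Nat.factorial (k i) := by
  rw [← Finset.mul_prod_erase Finset.univ _ (Finset.mem_univ j), Function.update_self]
  congr 1
  exact Finset.prod_congr rfl fun i hi => by
    rw [Function.update_of_ne (Finset.mem_erase.1 hi).1]

lemma sum_update_split {r : ℕ} (k : Fin r → ℕ) (j : Fin r) (v : ℕ) :
    ∑ i : Fin r, Function.update k j v i = v + ∑ i ∈ Finset.univ.erase j, k i := by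
  rw [← Finset.add_sum_erase Finset.univ _ (Finset.mem_univ j), Function.update_self]
  congr 1
  exact Finset.sum_congr rfl fun i hi => by
    rw [Function.update_of_ne (Finset.mem_erase.1 hi).1]

lemma mul_multinomial_update {r : ℕ} (k : Fin r → ℕ) (j : Fin r) (h : 0 < k j) :
    (∑ i, k i) * Nat.multinomial Finset.univ (Function.update k j (k j - 1)) =
      k j * Nat.multinomial Finset.univ k := by
  have hP : ∏ i : Fin r, Nat.factorial (k i) = k j * ∏ i : Fin r, Nat.factorial (Function.update k j (k j - 1) i) := by
    rw [prod_fact_update, ← Finset.mul_prod_erase Finset.univ _ (Finset.mem_univ j), ← mul_assoc]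
    congr 1
    rw [← Nat.succ_pred_eq_of_pos h, Nat.factorial_succ]
    simp [Nat.succ_pred_eq_of_pos h]
  have hS : ∑ i, k i = (∑ i, Function.update k j (k j - 1) i) + 1 := by
    rw [sum_update_split, ← Finset.add_sum_erase Finset.univ _ (Finset.mem_univ j)]
    omega
  have spec1 := Nat.multinomial_spec Finset.univ k
  have spec2 := Nat.multinomial_spec Finset.univ (Function.update k j (k j - 1))
  have hpos : 0 < ∏ i : Fin r, Nat.factorial (Function.update k j (k j - 1) i) :=
    Finset.prod_pos fun i _ => Nat.factorial_pos _
  apply Nat.eq_of_mul_eq_mul_left hpos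
  calc (∏ i : Fin r, Nat.factorial (Function.update k j (k j - 1) i)) *
        ((∑ i, k i) * Nat.multinomial Finset.univ (Function.update k j (k j - 1)))
      = (∑ i, k i) * ((∏ i : Fin r, Nat.factorial (Function.update k j (k j - 1) i)) *
          Nat.multinomial Finset.univ (Function.update k j (k j - 1))) := by ring
    _ = (∑ i, k i) * Nat.factorial (∑ i, Function.update k j (k j - 1) i) := by rw [spec2]
    _ = Nat.factorial (∑ i, k i) := by rw [hS]; rw [Nat.factorial_succ]
    _ = (∏ i : Fin r, Nat.factorial (k i)) * Nat.multinomial Finset.univ k := spec1.symm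
    _ = (∏ i : Fin r, Nat.factorial (Function.update k j (k j - 1) i)) *
        (k j * Nat.multinomial Finset.univ k) := by rw [hP]; ring

lemma multinomial_pascal {r : ℕ} (k : Fin r → ℕ) (h : 0 < ∑ i, k i) :
    Nat.multinomial Finset.univ k =
      ∑ j : Fin r, if 0 < k j then
        Nat.multinomial Finset.univ (Function.update k j (k j - 1)) else 0 := by
  apply Nat.eq_of_mul_eq_mul_left h
  rw [Finset.mul_sum]
  have : ∀ j : Fin r, (∑ i, k i) * (if 0 < k j then
      Nat.multinomial Finset.univ (Function.update k j (k j - 1)) else 0)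
      = k j * Nat.multinomial Finset.univ k := by
    intro j
    by_cases hj : 0 < k j
    · rw [if_pos hj, mul_multinomial_update k j hj]
    · rw [if_neg hj]; have hz : k j = 0 := by omega
      simp [hz]
  rw [Finset.sum_congr rfl fun j _ => this j, ← Finset.sum_mul]

lemma mem_T {r m : ℕ} (k : Fin r → ℕ) :
    (k ∈ (Fintype.piFinset fun _ : Fin r => Finset.range (m - r + 1)).filter
      (fun k : Fin r → ℕ => ∑ j : Fin r, ((j : ℕ) + 1) * k j = m - r)) ↔
    ∑ j : Fin r, ((j : ℕ) + 1) * k j = m - r := by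
  simp only [Finset.mem_filter, Fintype.mem_piFinset, Finset.mem_range]
  constructor
  · exact fun h => h.2
  · intro h
    refine ⟨fun i => ?_, h⟩
    have h1 : ((i : ℕ) + 1) * k i ≤ m - r :=
      h ▸ Finset.single_le_sum (f := fun j : Fin r => ((j : ℕ) + 1) * k j)
        (fun _ _ => Nat.zero_le _) (Finset.mem_univ i)
    nlinarith [Nat.le_mul_of_pos_left (k i) (Nat.succ_pos (i : ℕ))]

lemma rho_lt {R : Type*} [Ring R] {r m : ℕ} (A : ℕ → R) (h : m < r) : rho r A m = 0 := by
  simp [rho, h]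

lemma rho_self {R : Type*} [Ring R] (r : ℕ) (A : ℕ → R) : rho r A r = 1 := by
  rw [rho, if_neg (lt_irrefl r)]
  have hT : ((Fintype.piFinset fun _ : Fin r => Finset.range (r - r + 1)).filter
      (fun k : Fin r → ℕ => ∑ j : Fin r, ((j : ℕ) + 1) * k j = r - r)) = {fun _ => 0} := by
    ext k
    rw [mem_T, Finset.mem_singleton]
    simp only [Nat.sub_self]
    constructor
    · intro h
      funext i
      have h1 : ((i : ℕ) + 1) * k i ≤ 0 :=
        h ▸ Finset.single_le_sum (f := fun j : Fin r => ((j : ℕ) + 1) * k j)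
          (fun _ _ => Nat.zero_le _) (Finset.mem_univ i)
      exact Nat.le_zero.mp (le_trans (Nat.le_mul_of_pos_left (k i) (Nat.succ_pos _)) h1)
    · intro h; subst h; simp
  rw [hT, Finset.sum_singleton]
  simp [Nat.multinomial, List.prod_ofFn]

lemma wsum_update {r : ℕ} (k : Fin r → ℕ) (j : Fin r) (v : ℕ) :
    ∑ i : Fin r, ((i : ℕ) + 1) * Function.update k j v i =
      ((j : ℕ) + 1) * v + ∑ i ∈ Finset.univ.erase j, ((i : ℕ) + 1) * k i := by
  rw [← Finset.add_sum_erase Finset.univ _ (Finset.mem_univ j), Function.update_self]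
  congr 1
  exact Finset.sum_congr rfl fun i hi => by rw [Function.update_of_ne (Finset.mem_erase.1 hi).1]

lemma wsum_split {r : ℕ} (k : Fin r → ℕ) (j : Fin r) :
    ∑ i : Fin r, ((i : ℕ) + 1) * k i =
      ((j : ℕ) + 1) * k j + ∑ i ∈ Finset.univ.erase j, ((i : ℕ) + 1) * k i :=
  (Finset.add_sum_erase Finset.univ _ (Finset.mem_univ j)).symm

lemma prod_pow_update {r : ℕ} (A : ℕ → ℂ) (k : Fin r → ℕ) (j : Fin r) (v : ℕ) :
    ∏ i : Fin r, A i ^ Function.update k j v i =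
      A j ^ v * ∏ i ∈ Finset.univ.erase j, A i ^ k i := by
  rw [← Finset.mul_prod_erase Finset.univ _ (Finset.mem_univ j), Function.update_self]
  congr 1
  exact Finset.prod_congr rfl fun i hi => by rw [Function.update_of_ne (Finset.mem_erase.1 hi).1]

lemma prod_pow_split {r : ℕ} (A : ℕ → ℂ) (k : Fin r → ℕ) (j : Fin r) :
    ∏ i : Fin r, A i ^ k i = A j ^ k j * ∏ i ∈ Finset.univ.erase j, A i ^ k i :=
  (Finset.mul_prod_erase Finset.univ _ (Finset.mem_univ j)).symm

lemma rho_rec_s14 (r : ℕ) (A : ℕ → ℂ) (m : ℕ) (hrm : r + 1 ≤ m) :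
    rho r A m = ∑ j ∈ Finset.range r, A j * rho r A (m - 1 - j) := by
  have hmr : 1 ≤ m - r := by omega
  rw [rho, if_neg (by omega)]
  simp only [List.prod_ofFn]
  have step1 : ∀ k ∈ (Fintype.piFinset fun _ : Fin r => Finset.range (m - r + 1)).filter
      (fun k : Fin r → ℕ => ∑ j : Fin r, ((j : ℕ) + 1) * k j = m - r),
      (Nat.multinomial Finset.univ k : ℂ) * ∏ i : Fin r, A i ^ k i =
      ∑ j : Fin r, (if 0 < k j then
          (Nat.multinomial Finset.univ (Function.update k j (k j - 1)) : ℂ) else 0) *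
        ∏ i : Fin r, A i ^ k i := by
    intro k hk
    rw [mem_T] at hk
    have hpos : 0 < ∑ i, k i := by
      by_contra hz
      have : ∀ i ∈ Finset.univ, k i = 0 := by
        intro i _
        have := Finset.single_le_sum (f := k) (fun _ _ => Nat.zero_le _) (Finset.mem_univ i)
        omega
      have : ∑ j : Fin r, ((j : ℕ) + 1) * k j = 0 :=
        Finset.sum_eq_zero fun i _ => by rw [this i (Finset.mem_univ i), mul_zero]
      omega
    rw [multinomial_pascal k hpos, Nat.cast_sum, Finset.sum_mul]
    refine Finset.sum_congr rfl fun j _ => ?_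
    rw [apply_ite (Nat.cast : ℕ → ℂ)]
    norm_num
  rw [Finset.sum_congr rfl step1, Finset.sum_comm, ← Fin.sum_univ_eq_sum_range]
  refine Finset.sum_congr rfl fun j _ => ?_
  by_cases hj : (j : ℕ) + 1 ≤ m - r
  · rw [rho, if_neg (by omega)]
    simp only [List.prod_ofFn, ite_mul, zero_mul]
    rw [← Finset.sum_filter, Finset.mul_sum]
    refine Finset.sum_nbij' (fun k => Function.update k j (k j - 1))
      (fun k' => Function.update k' j (k' j + 1)) ?_ ?_ ?_ ?_ ?_
    · intro k hk
      rw [Finset.mem_filter, mem_T] at hk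
      obtain ⟨hk, hkj⟩ := hk
      rw [mem_T, wsum_update]
      have e1 : ((j : ℕ) + 1) * (k j - 1) + ((j : ℕ) + 1) = ((j : ℕ) + 1) * k j := by
        rw [← Nat.mul_succ]
        congr 1
        omega
      have e2 := wsum_split k j
      have e3 : ((j : ℕ) + 1) ≤ ((j : ℕ) + 1) * k j := Nat.le_mul_of_pos_right _ hkj
      omega
    · intro k' hk'
      rw [mem_T] at hk'
      rw [Finset.mem_filter, mem_T, wsum_update]
      refine ⟨?_, by simp⟩
      have e1 : ((j : ℕ) + 1) * (k' j + 1) = ((j : ℕ) + 1) * k' j + ((j : ℕ) + 1) :=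
        Nat.mul_succ _ _
      have e2 := wsum_split k' j
      omega
    · intro k hk
      rw [Finset.mem_filter] at hk
      have hkj := hk.2
      funext i
      by_cases hi : i = j
      · subst hi
        simp only [Function.update_self]
        omega
      · simp [Function.update_of_ne hi]
    · intro k' _
      funext i
      by_cases hi : i = j
      · subst hi
        simp only [Function.update_self]
        omega
      · simp [Function.update_of_ne hi]
    · intro k hk
      rw [Finset.mem_filter] at hk
      have hkj := hk.2
      have hAj : A j ^ k j = A j * A j ^ (k j - 1) := by
        conv_lhs => rw [show k j = (k j - 1) + 1 by omega]
        rw [pow_succ]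
        ring
      rw [prod_pow_split A k j, prod_pow_update, hAj]
      ring
  · have h1 : rho r A (m - 1 - (j : ℕ)) = 0 := rho_lt A (by omega)
    rw [h1, mul_zero]
    refine Finset.sum_eq_zero fun k hk => ?_
    rw [mem_T] at hk
    have hkj : k j = 0 := by
      by_contra hz
      have e3 : ((j : ℕ) + 1) ≤ ((j : ℕ) + 1) * k j := Nat.le_mul_of_pos_right _ (by omega)
      have h1 : ((j : ℕ) + 1) * k j ≤ m - r :=
        hk ▸ Finset.single_le_sum (f := fun i : Fin r => ((i : ℕ) + 1) * k i)
          (fun _ _ => Nat.zero_le _) (Finset.mem_univ j)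
      omega
    rw [if_neg (by omega), zero_mul]

/-- Combinatorial formula for a complex scalar sequence satisfying the linear recurrence
`γ_{n+r} = a₀ γ_{n+r-1} + ⋯ + a_{r-1} γ_n`: for every `n ≥ r`,
`γ_n = Σ_{s=0}^{r-1} ρ(n−s, r; a) W_s` with `W_s = Σ_{j=s}^{r-1} a_j γ_{s+r-1-j}`. -/
theorem scalar_recurrence_combinatorial_formula
    {r : ℕ} (hr : 2 ≤ r) (a : ℕ → ℂ) (γ : ℕ → ℂ)
    (hrec : ∀ n : ℕ, γ (n + r) = ∑ j ∈ Finset.range r, a j * γ (n + (r - 1 - j))) :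
    ∀ n : ℕ, r ≤ n →
      γ n = ∑ s ∈ Finset.range r, rho r a (n - s) *
        (∑ j ∈ Finset.Icc s (r - 1), a j * γ (s + (r - 1 - j))) := by
  intro n
  induction n using Nat.strong_induction_on with
  | _ n IH =>
    intro hn
    rcases eq_or_lt_of_le hn with heq | hlt
    · subst heq
      have h0 : ∀ s ∈ Finset.range r, s ≠ 0 →
          rho r a (r - s) * (∑ j ∈ Finset.Icc s (r - 1), a j * γ (s + (r - 1 - j))) = 0 := by
        intro s hs hs0
        rw [Finset.mem_range] at hs
        rw [rho_lt a (by omega), zero_mul]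
      rw [Finset.sum_eq_single 0 h0
        (fun h => absurd (Finset.mem_range.2 (by omega)) h), Nat.sub_zero, rho_self, one_mul]
      have hIcc : Finset.Icc 0 (r - 1) = Finset.range r := by
        ext x; simp; omega
      rw [hIcc]
      have h0r := hrec 0
      simp only [zero_add] at h0r ⊢
      exact h0r
    · set W : ℕ → ℂ := fun s => ∑ j ∈ Finset.Icc s (r - 1), a j * γ (s + (r - 1 - j)) with hW
      have key : ∀ s ∈ Finset.range r, rho r a (n - s) =
          (if s = n - r then (1 : ℂ) else 0) +
            ∑ j ∈ Finset.range r, a j * rho r a (n - 1 - j - s) := by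
        intro s hs
        rw [Finset.mem_range] at hs
        rcases lt_trichotomy s (n - r) with h1 | h1 | h1
        · rw [if_neg (by omega), zero_add, rho_rec_s14 r a (n - s) (by omega)]
          exact Finset.sum_congr rfl fun j hj => by
            rw [show n - s - 1 - (j : ℕ) = n - 1 - j - s from by omega]
        · rw [if_pos h1, show n - s = r from by omega, rho_self]
          have hz : ∀ j ∈ Finset.range r, a j * rho r a (n - 1 - j - s) = 0 := by
            intro j hj
            rw [Finset.mem_range] at hj
            rw [rho_lt a (by omega), mul_zero]
          rw [Finset.sum_eq_zero hz]; ring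
        · rw [if_neg (by omega), rho_lt a (by omega), zero_add]
          refine (Finset.sum_eq_zero fun j hj => ?_).symm
          rw [Finset.mem_range] at hj
          rw [rho_lt a (by omega), mul_zero]
      have hstep : γ n = ∑ j ∈ Finset.range r, a j * γ (n - 1 - j) := by
        have h := hrec (n - r)
        rw [show n - r + r = n from by omega] at h
        rw [h]
        refine Finset.sum_congr rfl fun j hj => ?_
        rw [Finset.mem_range] at hj
        rw [show n - r + (r - 1 - j) = n - 1 - j from by omega]
      have hsplit : ∀ j ∈ Finset.range r,
          a j * γ (n - 1 - j) =
            a j * (∑ s ∈ Finset.range r, rho r a (n - 1 - j - s) * W s) +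
              (if n - r ≤ j then a j * γ (n - 1 - j) else 0) := by
        intro j hj
        rw [Finset.mem_range] at hj
        by_cases hc : n - r ≤ j
        · rw [if_pos hc]
          have hz : ∀ s ∈ Finset.range r, rho r a (n - 1 - j - s) * W s = 0 := by
            intro s hs
            rw [rho_lt a (by omega), zero_mul]
          rw [Finset.sum_eq_zero hz]; ring
        · rw [if_neg hc, add_zero]
          simp only [hW]
          rw [IH (n - 1 - j) (by omega) (by omega)]
      have hpiece1 : ∑ j ∈ Finset.range r,
          (if n - r ≤ j then a j * γ (n - 1 - j) else 0) = W (n - r) := by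
        rw [← Finset.sum_filter]
        have hfe : (Finset.range r).filter (fun j => n - r ≤ j) = Finset.Icc (n - r) (r - 1) := by
          ext x; simp; omega
        rw [hfe]
        simp only [hW]
        refine Finset.sum_congr rfl fun j hj => ?_
        rw [Finset.mem_Icc] at hj
        rw [show n - r + (r - 1 - j) = n - 1 - j from by omega]
      have hrhs : ∑ s ∈ Finset.range r, rho r a (n - s) * W s
          = W (n - r) + ∑ j ∈ Finset.range r,
              a j * ∑ s ∈ Finset.range r, rho r a (n - 1 - j - s) * W s := by
        rw [Finset.sum_congr rfl fun s hs => by rw [key s hs]]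
        simp only [add_mul, ite_mul, one_mul, zero_mul]
        rw [Finset.sum_add_distrib]
        congr 1
        · rw [Finset.sum_ite_eq' (Finset.range r) (n - r) W]
          by_cases hc : n - r ∈ Finset.range r
          · rw [if_pos hc]
          · rw [if_neg hc]
            rw [Finset.mem_range] at hc
            simp only [hW]
            rw [Finset.Icc_eq_empty (by omega), Finset.sum_empty]
        · simp only [Finset.sum_mul]
          rw [Finset.sum_comm]
          refine Finset.sum_congr rfl fun j _ => ?_
          rw [Finset.mul_sum]
          exact Finset.sum_congr rfl fun s _ => by ring
      have final : γ n = ∑ s ∈ Finset.range r, rho r a (n - s) * W s := by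
        rw [hrhs, hstep, Finset.sum_congr rfl hsplit, Finset.sum_add_distrib, hpiece1]
        exact add_comm _ _
      simpa only [hW] using final
end
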